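/- arXiv:1912.04933 — 4 statements merged into one kernel-verified Lean document; each statement's English description precedes it below -/
import Mathlib

section
/- Let S ⊂ Z_{>0} be a nonempty finite set with m = max(S), let n ≥ m+1 be an integer, and let π ∈ A(S; m+1) with π(m+1) = k. Then Σ q^{ℓ(w)}, summed over all w ∈ A(S;n) such that the standardization of (w(1), ..., w(m+1)) equals π, is equal to q^{ℓ(π)} · [n−k choose m−k+1]_q. -/
/-!
Because `max S = m`, such a `w` has no descent from position `m + 1` on, so it is determined by
the set `T` of its first `m + 1` values: these are `T` arranged in the pattern `π`, followed by
`Tᶜ` in increasing order. Such a word lies in `A(S;n)` exactly when `w(m+1) < w(m+2)`; since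
`w(m+1)` is the `k`-th smallest element of `T`, this means `{1, …, k} ⊆ T`. The inversions of `w`
are those of `π` plus the pairs `x ∈ T`, `y ∉ T` with `y < x`. Deleting `{1, …, k}` from `T`
leaves an arbitrary `(m - k + 1)`-subset of `{k + 1, …, n}` with the same number of such pairs,
and the generating function of this statistic over the `r`-subsets of an `N`-set satisfies the
q-Pascal recursion, hence equals `[N choose r]_q`.
-/

open Polynomial Finset

noncomputable section

/-- The number of inversions (the Coxeter length) of a permutation of `Fin n`. -/
def invNum {n : ℕ} (π : Equiv.Perm (Fin n)) : ℕ :=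
  (Finset.univ.filter fun p : Fin n × Fin n => p.1 < p.2 ∧ π p.2 < π p.1).card

/-- The descent set of a permutation, as a set of positive integers (1-indexed positions):
`i ∈ Des(π)` iff `1 ≤ i ≤ n-1` and `π_i > π_{i+1}` in one-line notation. -/
def DesSet {n : ℕ} (π : Equiv.Perm (Fin n)) : Finset ℕ :=
  (Finset.univ.filter fun a : Fin n => ∃ b : Fin n, (a : ℕ) + 1 = (b : ℕ) ∧ π b < π a).image
    fun a : Fin n => (a : ℕ) + 1

/-- The peak set of a permutation (1-indexed positions):
`i ∈ Peak(π)` iff `2 ≤ i ≤ n-1` and `π_{i-1} < π_i > π_{i+1}` in one-line notation. -/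
def PeakSet {n : ℕ} (π : Equiv.Perm (Fin n)) : Finset ℕ :=
  (Finset.univ.filter fun b : Fin n =>
      ∃ a c : Fin n, (a : ℕ) + 1 = (b : ℕ) ∧ (b : ℕ) + 1 = (c : ℕ) ∧ π a < π b ∧ π c < π b).image
    fun b : Fin n => (b : ℕ) + 1

/-- The q-integer `[j]_q = 1 + q + ⋯ + q^(j-1)`. -/
def qNum (j : ℕ) : Polynomial ℝ := ∑ i ∈ Finset.range j, X ^ i

/-- The q-factorial `[n]!_q = [1]_q [2]_q ⋯ [n]_q`. -/
def qFactorial : ℕ → Polynomial ℝ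
  | 0 => 1
  | n + 1 => qFactorial n * qNum (n + 1)

/-- The q-binomial coefficient `[n choose k]_q = [n]!_q / ([k]!_q [n-k]!_q)`.
(The divisor is monic and the division is exact, so `divByMonic` gives the true quotient.) -/
def qBinom (n k : ℕ) : Polynomial ℝ :=
  qFactorial n /ₘ (qFactorial k * qFactorial (n - k))

/-- `(−q;q)_k = (1+q)(1+q²)⋯(1+q^k)`. -/
def qPoch (k : ℕ) : Polynomial ℝ := ∏ i ∈ Finset.range k, (1 + X ^ (i + 1))

/-- `D_S(n,q) = Σ_{π ∈ 𝔖_n, Des(π) = S} q^{ℓ(π)}`. -/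
def Dpoly (S : Finset ℕ) (n : ℕ) : Polynomial ℝ :=
  ∑ π ∈ Finset.univ.filter (fun π : Equiv.Perm (Fin n) => DesSet π = S), X ^ invNum π

/-- `P_S(n,q) = Σ_{π ∈ 𝔖_n, Peak(π) = S} q^{ℓ(π)}`. -/
def Ppoly (S : Finset ℕ) (n : ℕ) : Polynomial ℝ :=
  ∑ π ∈ Finset.univ.filter (fun π : Equiv.Perm (Fin n) => PeakSet π = S), X ^ invNum π

/-- `Q_S(n,q) = Σ_{π ∈ 𝔖_n, Peak(π) ⊇ S} q^{ℓ(π)}`. -/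
def Qpoly (S : Finset ℕ) (n : ℕ) : Polynomial ℝ :=
  ∑ π ∈ Finset.univ.filter (fun π : Equiv.Perm (Fin n) => S ⊆ PeakSet π), X ^ invNum π

/-- The sequence `(a i)` for `lo ≤ i ≤ hi` is strongly q-log concave: it has no internal
zeroes and `a i * a j - a (i-1) * a (j+1)` has nonnegative coefficients for `lo < i ≤ j < hi`. -/
def StronglyQLogConcave (lo hi : ℕ) (a : ℕ → Polynomial ℝ) : Prop :=
  (∀ i j l : ℕ, lo ≤ i → i < j → j < l → l ≤ hi → a i ≠ 0 → a l ≠ 0 → a j ≠ 0) ∧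
  ∀ i j : ℕ, lo < i → i ≤ j → j < hi → ∀ m : ℕ,
    0 ≤ (a i * a j - a (i - 1) * a (j + 1)).coeff m

lemma qNum_add (a b : ℕ) : qNum (a + b) = qNum a + X ^ a * qNum b := by
  rw [qNum, qNum, qNum, sum_range_add, mul_sum]
  simp only [pow_add]

lemma qFactorial_monic (n : ℕ) : (qFactorial n).Monic := by
  induction n with
  | zero => exact monic_one
  | succ n ih => exact ih.mul (by simpa [qNum] using monic_geom_sum_X (R := ℝ) n.succ_ne_zero)

section SubsetInversions

variable {α : Type*} [LinearOrder α]

def subsetInvNum (s A : Finset α) : ℕ := ∑ x ∈ A, #((s \ A).filter (· < x))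

def subsetInvGF (s : Finset α) (r : ℕ) : ℝ[X] :=
  ∑ A ∈ s.powersetCard r, X ^ subsetInvNum s A

lemma subsetInvNum_insert_of_subset {t A : Finset α} {a : α} (hlt : ∀ x ∈ t, x < a)
    (hA : A ⊆ t) : subsetInvNum (insert a t) A = subsetInvNum t A := by
  have haA : a ∉ A := fun h => (hlt a (hA h)).false
  refine sum_congr rfl fun x hx => ?_
  rw [insert_sdiff_of_notMem _ haA, filter_insert, if_neg (hlt x (hA hx)).not_gt]

lemma subsetInvNum_insert_insert {t A : Finset α} {a : α} (hlt : ∀ x ∈ t, x < a)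
    (hA : A ⊆ t) : subsetInvNum (insert a t) (insert a A) = subsetInvNum t A + (#t - #A) := by
  have hat : a ∉ t := fun h => (hlt a h).false
  rw [subsetInvNum, sum_insert fun h => hat (hA h), insert_sdiff_insert,
    sdiff_insert_of_notMem hat, filter_true_of_mem fun x hx => hlt x (mem_sdiff.1 hx).1,
    card_sdiff_of_subset hA, add_comm, subsetInvNum]

lemma subsetInvGF_zero (s : Finset α) : subsetInvGF s 0 = 1 := by
  simp [subsetInvGF, subsetInvNum]

lemma subsetInvGF_eq_zero {s : Finset α} {r : ℕ} (h : #s < r) : subsetInvGF s r = 0 := by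
  rw [subsetInvGF, powersetCard_eq_empty.2 h, sum_empty]

lemma subsetInvGF_insert_succ {t : Finset α} {a : α} (hlt : ∀ x ∈ t, x < a) (r : ℕ) :
    subsetInvGF (insert a t) (r + 1) =
      X ^ (#t - r) * subsetInvGF t r + subsetInvGF t (r + 1) := by
  have hat : a ∉ t := fun h => (hlt a h).false
  have hdisj : Disjoint (t.powersetCard (r + 1)) ((t.powersetCard r).image (insert a)) := by
    refine disjoint_left.2 fun A hA hA' => ?_
    obtain ⟨B, -, rfl⟩ := mem_image.1 hA'
    exact hat ((mem_powersetCard.1 hA).1 (mem_insert_self a B))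
  have hinj : Set.InjOn (insert a) (t.powersetCard r : Set (Finset α)) := fun A hA B hB hAB => by
    rw [← erase_insert fun h => hat ((mem_powersetCard.1 hA).1 h), hAB,
      erase_insert fun h => hat ((mem_powersetCard.1 hB).1 h)]
  rw [subsetInvGF, powersetCard_succ_insert hat, sum_union hdisj, sum_image hinj, add_comm,
    subsetInvGF, subsetInvGF, mul_sum]
  congr 1
  · refine sum_congr rfl fun A hA => ?_
    obtain ⟨hAt, hcard⟩ := mem_powersetCard.1 hA
    rw [subsetInvNum_insert_insert hlt hAt, hcard, pow_add, mul_comm]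
  · refine sum_congr rfl fun A hA => ?_
    rw [subsetInvNum_insert_of_subset hlt (mem_powersetCard.1 hA).1]

/-- The q-Pascal recursion `subsetInvGF_insert_succ` matches the one satisfied by
`[N]!_q / ([r]!_q [N-r]!_q)`, through `[N+1]_q = [N-r]_q + q^(N-r) [r+1]_q`. -/
lemma subsetInvGF_mul_qFactorial (s : Finset α) {r : ℕ} (hr : r ≤ #s) :
    subsetInvGF s r * (qFactorial r * qFactorial (#s - r)) = qFactorial #s := by
  induction s using Finset.induction_on_max generalizing r with
  | empty =>
    obtain rfl : r = 0 := by simpa using hr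
    simp [subsetInvGF_zero, qFactorial]
  | insert a t hlt ih =>
    have hat : a ∉ t := fun h => (hlt a h).false
    rw [card_insert_of_notMem hat] at hr ⊢
    obtain _ | r := r
    · simp [subsetInvGF_zero, qFactorial]
    have hPascal : qNum (#t + 1) = qNum (#t - r) + X ^ (#t - r) * qNum (r + 1) := by
      rw [← qNum_add]; congr 1; omega
    rw [subsetInvGF_insert_succ hlt, Nat.add_sub_add_right, qFactorial, qFactorial, hPascal]
    rcases (Nat.lt_succ_iff.1 hr).lt_or_eq with hrt | rfl
    · obtain ⟨d, hd⟩ : ∃ d, #t - r = d + 1 := ⟨#t - r - 1, by omega⟩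
      have h1 := ih (r := r) (by omega)
      have h2 := ih (r := r + 1) hrt
      rw [hd, qFactorial] at h1 ⊢
      rw [show #t - (r + 1) = d by omega] at h2
      rw [qFactorial] at h2
      linear_combination X ^ (d + 1) * qNum (r + 1) * h1 + qNum (d + 1) * h2
    · have h1 := ih (r := #t) le_rfl
      have hq0 : qNum 0 = 0 := sum_range_zero _
      rw [Nat.sub_self, qFactorial] at h1
      rw [subsetInvGF_eq_zero (r := #t + 1) (by omega), Nat.sub_self, qFactorial, hq0]
      linear_combination qNum (#t + 1) * h1

lemma qBinom_card_eq_subsetInvGF (s : Finset α) {r : ℕ} (hr : r ≤ #s) :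
    qBinom #s r = subsetInvGF s r := by
  have hmonic := (qFactorial_monic r).mul (qFactorial_monic (#s - r))
  rw [qBinom, ← subsetInvGF_mul_qFactorial s hr, divByMonic_eq_div _ hmonic,
    mul_div_cancel_right₀ _ hmonic.ne_zero]

lemma subsetInvNum_sdiff_of_lowerSet {s T L : Finset α} (hLT : L ⊆ T)
    (hL : ∀ x ∈ L, ∀ y ∈ s, y < x → y ∈ L) :
    subsetInvNum s T = subsetInvNum (s \ L) (T \ L) := by
  rw [subsetInvNum, ← sum_sdiff hLT, sum_eq_zero (s := L), add_zero, subsetInvNum,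
    sdiff_sdiff_sdiff_cancel_right hLT]
  intro x hx
  refine card_eq_zero.2 (filter_eq_empty_iff.2 fun y hy hyx => ?_)
  exact (mem_sdiff.1 hy).2 (hLT (hL x hx y (mem_sdiff.1 hy).1 hyx))

lemma sum_powersetCard_superset {s L : Finset α} (hLs : L ⊆ s)
    (hL : ∀ x ∈ L, ∀ y ∈ s, y < x → y ∈ L) {c : ℕ} (hc : #L ≤ c) :
    ∑ T ∈ (s.powersetCard c).filter (L ⊆ ·), X ^ subsetInvNum s T =
      subsetInvGF (s \ L) (c - #L) := by
  refine sum_nbij' (· \ L) (· ∪ L) (fun T hT => ?_) (fun A hA => ?_) (fun T hT => ?_)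
    (fun A hA => ?_) (fun T hT => ?_)
  · obtain ⟨hT, hLT⟩ := mem_filter.1 hT
    obtain ⟨hTs, hTc⟩ := mem_powersetCard.1 hT
    exact mem_powersetCard.2
      ⟨sdiff_subset_sdiff hTs le_rfl, by rw [card_sdiff_of_subset hLT, hTc]⟩
  · obtain ⟨hAs, hAc⟩ := mem_powersetCard.1 hA
    have hdisj : Disjoint A L := disjoint_of_subset_left hAs sdiff_disjoint
    refine mem_filter.2 ⟨mem_powersetCard.2 ⟨union_subset (hAs.trans sdiff_subset) hLs, ?_⟩,
      subset_union_right⟩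
    rw [card_union_of_disjoint hdisj]
    omega
  · exact sdiff_union_of_subset (mem_filter.1 hT).2
  · exact union_sdiff_cancel_right
      (disjoint_of_subset_left (mem_powersetCard.1 hA).1 sdiff_disjoint)
  · rw [subsetInvNum_sdiff_of_lowerSet (mem_filter.1 hT).2 hL]

end SubsetInversions

namespace Finset

variable {α : Type*} [LinearOrder α]

lemma sum_orderEmbOfFin {M : Type*} [AddCommMonoid M] (s : Finset α) {k : ℕ}
    (h : #s = k) (g : α → M) : ∑ i, g (s.orderEmbOfFin h i) = ∑ x ∈ s, g x := by
  conv_rhs => rw [← map_orderEmbOfFin_univ s h]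
  rw [sum_map]
  rfl

lemma exists_orderEmbOfFin_eq {s : Finset α} {k : ℕ} (h : #s = k)
    {x : α} (hx : x ∈ s) : ∃ i, s.orderEmbOfFin h i = x := by
  rwa [← Set.mem_range, range_orderEmbOfFin, mem_coe]

lemma card_filter_lt_orderEmbOfFin (s : Finset α) {k : ℕ}
    (h : #s = k) (i : Fin k) : #(s.filter (· < s.orderEmbOfFin h i)) = i := by
  have : s.filter (· < s.orderEmbOfFin h i) = (Iio i).map (s.orderEmbOfFin h).toEmbedding := by
    ext x
    simp only [mem_filter, mem_map, mem_Iio, RelEmbedding.coe_toEmbedding]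
    constructor
    · rintro ⟨hx, hlt⟩
      obtain ⟨j, rfl⟩ := exists_orderEmbOfFin_eq h hx
      exact ⟨j, (s.orderEmbOfFin h).lt_iff_lt.1 hlt, rfl⟩
    · rintro ⟨j, hj, rfl⟩
      exact ⟨orderEmbOfFin_mem s h j, (s.orderEmbOfFin h).lt_iff_lt.2 hj⟩
  rw [this, card_map, Fin.card_Iio]

end Finset

section HeadAndTail

variable {a b : ℕ}

lemma Fin.castAdd_lt_natAdd (i : Fin a) (j : Fin b) : Fin.castAdd b i < Fin.natAdd a j := by
  simp only [Fin.lt_def, Fin.val_castAdd, Fin.val_natAdd]; omega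

lemma card_compl_of_card_eq {T : Finset (Fin (a + b))} (hT : #T = a) : #Tᶜ = b := by
  rw [card_compl, hT, Fintype.card_fin, Nat.add_sub_cancel_left]

def headSet (w : Equiv.Perm (Fin (a + b))) : Finset (Fin (a + b)) :=
  univ.map ((Fin.castAddEmb b).trans w.toEmbedding)

lemma card_headSet (w : Equiv.Perm (Fin (a + b))) : #(headSet w) = a := by
  simp [headSet]

abbrev StdHead (w : Equiv.Perm (Fin (a + b))) (π : Equiv.Perm (Fin a)) : Prop :=
  ∀ i j, π i < π j ↔ w (Fin.castAdd b i) < w (Fin.castAdd b j)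

def permOfHead (π : Equiv.Perm (Fin a)) (T : Finset (Fin (a + b))) (hT : #T = a) :
    Equiv.Perm (Fin (a + b)) :=
  finSumFinEquiv.symm.trans <|
    (Equiv.sumCongr π (Equiv.refl _)).trans (finSumEquivOfFinset hT (card_compl_of_card_eq hT))

variable {π : Equiv.Perm (Fin a)} {T : Finset (Fin (a + b))} (hT : #T = a)

@[simp]
lemma permOfHead_castAdd (i : Fin a) :
    permOfHead π T hT (Fin.castAdd b i) = T.orderEmbOfFin hT (π i) := by
  simp [permOfHead]

@[simp]
lemma permOfHead_natAdd (j : Fin b) :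
    permOfHead π T hT (Fin.natAdd a j) = Tᶜ.orderEmbOfFin (card_compl_of_card_eq hT) j := by
  simp [permOfHead]

lemma stdHead_permOfHead : StdHead (permOfHead π T hT) π := by
  simp [StdHead]

lemma headSet_permOfHead : headSet (permOfHead π T hT) = T := by
  ext x
  simp only [headSet, mem_map, mem_univ, true_and, Function.Embedding.trans_apply,
    Fin.coe_castAddEmb, Equiv.coe_toEmbedding, permOfHead_castAdd]
  refine ⟨fun ⟨i, hi⟩ => hi ▸ orderEmbOfFin_mem T hT _, fun hx => ?_⟩
  obtain ⟨j, rfl⟩ := exists_orderEmbOfFin_eq hT hx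
  exact ⟨π.symm j, by simp⟩

lemma eq_permOfHead {w : Equiv.Perm (Fin (a + b))} (hw : StdHead w π)
    (htail : StrictMono (w ∘ Fin.natAdd a)) :
    w = permOfHead π (headSet w) (card_headSet w) := by
  have hhead : (fun j => w (Fin.castAdd b (π.symm j))) =
      (headSet w).orderEmbOfFin (card_headSet w) :=
    orderEmbOfFin_unique _ (fun j => by simp [headSet])
      fun i j hij => (hw _ _).1 (by simpa using hij)
  have htail' : w ∘ Fin.natAdd a =
      (headSet w)ᶜ.orderEmbOfFin (card_compl_of_card_eq (card_headSet w)) :=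
    orderEmbOfFin_unique _ (fun j => by simp [headSet, Fin.ext_iff]; omega) htail
  ext p : 1
  refine Fin.addCases (fun i => ?_) (fun j => ?_) p
  · rw [permOfHead_castAdd, ← hhead]; simp
  · rw [permOfHead_natAdd, ← htail']; rfl

lemma invNum_eq_sum {n : ℕ} (σ : Equiv.Perm (Fin n)) :
    invNum σ = ∑ p, ∑ q, if p < q ∧ σ q < σ p then 1 else 0 := by
  rw [invNum, card_filter, Fintype.sum_prod_type]

lemma subsetInvNum_univ_eq_sum : subsetInvNum univ T = ∑ i : Fin a, ∑ j : Fin b,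
    if Tᶜ.orderEmbOfFin (card_compl_of_card_eq hT) j < T.orderEmbOfFin hT i then 1 else 0 := by
  rw [subsetInvNum, ← compl_eq_univ_sdiff, ← sum_orderEmbOfFin T hT]
  refine sum_congr rfl fun i _ => ?_
  rw [card_filter, ← sum_orderEmbOfFin Tᶜ (card_compl_of_card_eq hT)]

lemma invNum_permOfHead : invNum (permOfHead π T hT) = invNum π + subsetInvNum univ T := by
  rw [invNum_eq_sum, invNum_eq_sum π, subsetInvNum_univ_eq_sum hT]
  have hTH (i : Fin a) (j : Fin b) : ¬ Fin.natAdd a j < Fin.castAdd b i :=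
    (Fin.castAdd_lt_natAdd i j).not_gt
  have hTT (i j : Fin b) : ¬ (i < j ∧ j < i) := fun h => lt_asymm h.1 h.2
  simp only [Fin.sum_univ_add, permOfHead_castAdd, permOfHead_natAdd, Fin.castAdd_lt_natAdd,
    hTH, hTT, (Fin.strictMono_castAdd b).lt_iff_lt, Fin.natAdd_lt_natAdd_iff,
    OrderEmbedding.lt_iff_lt, true_and, false_and, if_false, sum_const_zero, add_zero]
  rw [sum_add_distrib]
  exact congrArg _ (Equiv.sum_comp π fun i => ∑ j : Fin b,
    if Tᶜ.orderEmbOfFin (card_compl_of_card_eq hT) j < T.orderEmbOfFin hT i then 1 else 0)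

/-- `v = T.orderEmbOfFin hT i` has exactly `i` elements of `T` below it, so `T` contains every
value up to `v` exactly when `v = i`. -/
lemma Iic_castAdd_subset_iff (i : Fin a) :
    Iic (Fin.castAdd b i) ⊆ T ↔ ∀ y ∉ T, T.orderEmbOfFin hT i < y := by
  set v := T.orderEmbOfFin hT i
  have hrank := card_filter_lt_orderEmbOfFin T hT i
  have hiv : (i : ℕ) ≤ v :=
    calc (i : ℕ) = #(T.filter (· < v)) := hrank.symm
      _ ≤ #(Iio v) := card_le_card fun y hy => mem_Iio.2 (mem_filter.1 hy).2
      _ = v := Fin.card_Iio v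
  constructor
  · intro hsub y hy
    by_contra! hyv
    have hyv' : y < v := lt_of_le_of_ne hyv fun h => hy (h ▸ orderEmbOfFin_mem T hT i)
    have hiy : Fin.castAdd b i < y := by
      by_contra! h
      exact hy (hsub (mem_Iic.2 h))
    have := card_le_card fun z hz =>
      mem_filter.2 ⟨hsub hz, (mem_Iic.1 hz).trans_lt (hiy.trans hyv')⟩
    rw [Fin.card_Iic, hrank, Fin.val_castAdd] at this
    omega
  · intro h y hy
    by_contra hyT
    have := Fin.lt_def.1 (h y hyT)
    have := Fin.le_def.1 (mem_Iic.1 hy)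
    rw [Fin.val_castAdd] at this
    omega

end HeadAndTail

lemma Fin.strictMonoOn_Ici_of_lt_succ {N : ℕ} {β : Type*} [Preorder β] {f : Fin N → β}
    {c : Fin N} (hf : ∀ p q : Fin N, c ≤ p → (p : ℕ) + 1 = q → f p < f q) :
    StrictMonoOn f (Set.Ici c) := by
  intro p hp q _ hpq
  obtain ⟨d, hd⟩ : ∃ d, (q : ℕ) = p + d + 1 :=
    ⟨q - p - 1, by have := Fin.lt_def.1 hpq; omega⟩
  induction d generalizing q with
  | zero => exact hf p q hp (by omega)
  | succ d ih =>
    have hq' : (p : ℕ) + d + 1 < N := by omega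
    refine (ih (q := ⟨p + d + 1, hq'⟩) ?_ ?_ rfl).trans (hf _ q ?_ (by simp only; omega))
    · simp only [Set.mem_Ici, Fin.le_def] at hp ⊢; omega
    · simp only [Fin.lt_def]; omega
    · simp only [Set.mem_Ici, Fin.le_def] at hp ⊢; omega

section DescentsOfHead

variable {m b : ℕ} {π : Equiv.Perm (Fin (m + 1))}

lemma strictMonoOn_permOfHead_iff {T : Finset (Fin (m + 1 + b))} (hT : #T = m + 1) :
    StrictMonoOn (permOfHead π T hT) (Set.Ici (Fin.castAdd b (Fin.last m))) ↔
      ∀ y ∉ T, T.orderEmbOfFin hT (π (Fin.last m)) < y := by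
  constructor
  · intro hmono y hy
    obtain ⟨j, rfl⟩ := exists_orderEmbOfFin_eq (card_compl_of_card_eq hT) (mem_compl.2 hy)
    simpa using hmono (Set.mem_Ici.2 le_rfl) (Set.mem_Ici.2 (Fin.castAdd_lt_natAdd _ j).le)
      (Fin.castAdd_lt_natAdd _ j)
  · intro h p hp q _ hpq
    induction q using Fin.addCases with
    | left j =>
      have := Fin.le_def.1 (Set.mem_Ici.1 hp)
      have := Fin.lt_def.1 hpq
      simp only [Fin.val_castAdd, Fin.val_last] at *
      omega
    | right j =>
      induction p using Fin.addCases with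
      | left i =>
        obtain rfl : i = Fin.last m := Fin.ext (by
          have := Fin.le_def.1 (Set.mem_Ici.1 hp)
          simp only [Fin.val_castAdd, Fin.val_last] at *
          omega)
        rw [permOfHead_castAdd, permOfHead_natAdd]
        exact h _ (mem_compl.1 (orderEmbOfFin_mem _ _ j))
      | right i =>
        simpa using (Fin.natAdd_lt_natAdd_iff _).1 hpq

lemma desSet_eq_iff_strictMonoOn {w : Equiv.Perm (Fin (m + 1 + b))} (hw : StdHead w π) :
    DesSet w = DesSet π ↔ StrictMonoOn w (Set.Ici (Fin.castAdd b (Fin.last m))) := by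
  constructor
  · intro hDes
    refine Fin.strictMonoOn_Ici_of_lt_succ fun p q hp hpq => ?_
    by_contra! hqp
    have hdesc : w q < w p := lt_of_le_of_ne hqp (w.injective.ne (Fin.ne_of_val_ne (by omega)))
    have hmem : (p : ℕ) + 1 ∈ DesSet π :=
      hDes ▸ mem_image.2 ⟨p, mem_filter.2 ⟨mem_univ _, q, hpq, hdesc⟩, rfl⟩
    obtain ⟨i, hi, hip⟩ := mem_image.1 hmem
    obtain ⟨j, hij, -⟩ := (mem_filter.1 hi).2
    have := Fin.le_def.1 hp
    have := j.isLt
    simp only [Fin.val_castAdd, Fin.val_last] at *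
    omega
  · intro hmono
    ext x
    simp only [DesSet, mem_image, mem_filter, mem_univ, true_and]
    constructor
    · rintro ⟨p, ⟨q, hpq, hqp⟩, rfl⟩
      have hpm : (p : ℕ) < m := by
        by_contra! h
        refine lt_asymm hqp (hmono ?_ ?_ (Fin.lt_def.2 (by omega))) <;>
          simp only [Set.mem_Ici, Fin.le_def, Fin.val_castAdd, Fin.val_last] <;> omega
      exact ⟨⟨p, by omega⟩, ⟨⟨q, by omega⟩, hpq, (hw _ _).2 hqp⟩, rfl⟩
    · rintro ⟨i, ⟨j, hij, hji⟩, rfl⟩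
      exact ⟨Fin.castAdd b i, ⟨Fin.castAdd b j, hij, (hw j i).1 hji⟩, rfl⟩

end DescentsOfHead

lemma val_apply_last_lt_of_mem_desSet {m : ℕ} {π : Equiv.Perm (Fin (m + 1))}
    (h : m ∈ DesSet π) : (π (Fin.last m) : ℕ) < m := by
  obtain ⟨i, hi, him⟩ := mem_image.1 h
  obtain ⟨j, hij, hji⟩ := (mem_filter.1 hi).2
  obtain rfl : j = Fin.last m := Fin.ext (by simp only [Fin.val_last]; omega)
  have := Fin.lt_def.1 hji
  have := (π i).isLt
  omega

theorem sum_desSet_stdHead {m b : ℕ} (π : Equiv.Perm (Fin (m + 1))) :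
    ∑ w ∈ univ.filter (fun w : Equiv.Perm (Fin (m + 1 + b)) =>
        DesSet w = DesSet π ∧ StdHead w π), (X : ℝ[X]) ^ invNum w =
      X ^ invNum π * ∑ T ∈ (univ.powersetCard (m + 1)).filter
        (Iic (Fin.castAdd b (π (Fin.last m))) ⊆ ·), X ^ subsetInvNum univ T := by
  have hcard {T} (hT : T ∈ (univ.powersetCard (m + 1)).filter
      (Iic (Fin.castAdd b (π (Fin.last m))) ⊆ ·)) : #T = m + 1 :=
    (mem_powersetCard.1 (mem_filter.1 hT).1).2
  have hdecomp {w} (hw : w ∈ univ.filter (fun w : Equiv.Perm (Fin (m + 1 + b)) =>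
      DesSet w = DesSet π ∧ StdHead w π)) :
      w = permOfHead π (headSet w) (card_headSet w) ∧
        Iic (Fin.castAdd b (π (Fin.last m))) ⊆ headSet w := by
    obtain ⟨hDes, hstd⟩ := (mem_filter.1 hw).2
    have hmono := (desSet_eq_iff_strictMonoOn hstd).1 hDes
    have hlast_le (j : Fin b) : Fin.castAdd b (Fin.last m) ≤ Fin.natAdd (m + 1) j :=
      (Fin.castAdd_lt_natAdd _ j).le
    have heq := eq_permOfHead hstd fun i j hij =>
      hmono (hlast_le i) (hlast_le j) ((Fin.strictMono_natAdd _) hij)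
    refine ⟨heq, (Iic_castAdd_subset_iff (card_headSet w) _).2
      ((strictMonoOn_permOfHead_iff (card_headSet w)).1 ?_)⟩
    rwa [← heq]
  rw [mul_sum]
  refine sum_bij' (fun w _ => headSet w) (fun T hT => permOfHead π T (hcard hT))
    (fun w hw => ?_) (fun T hT => ?_) (fun w hw => (hdecomp hw).1.symm)
    (fun T hT => headSet_permOfHead _) (fun w hw => ?_)
  · exact mem_filter.2 ⟨mem_powersetCard.2 ⟨subset_univ _, card_headSet w⟩, (hdecomp hw).2⟩
  · refine mem_filter.2 ⟨mem_univ _, ?_, stdHead_permOfHead _⟩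
    exact (desSet_eq_iff_strictMonoOn (stdHead_permOfHead _)).2 <|
      (strictMonoOn_permOfHead_iff _).2 <| (Iic_castAdd_subset_iff _ _).1 (mem_filter.1 hT).2
  · rw [← pow_add, ← invNum_permOfHead (card_headSet w), ← (hdecomp hw).1]

theorem stmt9_general (S : Finset ℕ) (hS : S.Nonempty)
    (m : ℕ) (hm : m = S.max' hS)
    (n : ℕ) (hn : m + 1 ≤ n)
    (k : ℕ) (π : Equiv.Perm (Fin (m + 1)))
    (hπ : DesSet π = S) (hπk : (π (Fin.last m) : ℕ) + 1 = k) :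
    (∑ w ∈ Finset.univ.filter (fun w : Equiv.Perm (Fin n) =>
        DesSet w = S ∧ ∀ i j : Fin (m + 1),
          (π i < π j ↔ w (Fin.castLE hn i) < w (Fin.castLE hn j))),
      (X : Polynomial ℝ) ^ invNum w) = X ^ invNum π * qBinom (n - k) (m - k + 1) := by
  obtain ⟨b, rfl⟩ := Nat.exists_eq_add_of_le hn
  have hkm : k ≤ m :=
    hπk ▸ val_apply_last_lt_of_mem_desSet (by rw [hπ, hm]; exact S.max'_mem hS)
  have hL : #(Iic (Fin.castAdd b (π (Fin.last m)))) = k := by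
    rw [Fin.card_Iic, Fin.val_castAdd, hπk]
  have hfilter : univ.filter (fun w : Equiv.Perm (Fin (m + 1 + b)) =>
      DesSet w = S ∧ ∀ i j : Fin (m + 1),
        (π i < π j ↔ w (Fin.castLE hn i) < w (Fin.castLE hn j))) =
      univ.filter fun w => DesSet w = DesSet π ∧ StdHead w π := by
    rw [hπ]; rfl
  have hlower : ∀ x ∈ Iic (Fin.castAdd b (π (Fin.last m))), ∀ y ∈ univ, y < x →
      y ∈ Iic (Fin.castAdd b (π (Fin.last m))) :=
    fun x hx y _ hyx => mem_Iic.2 (hyx.le.trans (mem_Iic.1 hx))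
  rw [hfilter, sum_desSet_stdHead, sum_powersetCard_superset (subset_univ _) hlower (by omega),
    ← qBinom_card_eq_subsetInvGF _ (by rw [card_univ_sdiff, Fintype.card_fin, hL]; omega),
    card_univ_sdiff, Fintype.card_fin, hL, Nat.sub_add_comm hkm]

/-- for `π ∈ A(S;m+1)` with `π(m+1) = k`, the sum of `q^{ℓ(w)}` over all
`w ∈ A(S;n)` whose standardization of the first `m+1` entries is `π` equals
`q^{ℓ(π)} [n-k choose m-k+1]_q`. -/
theorem stmt9 (S : Finset ℕ) (hS : S.Nonempty) (hpos : ∀ s ∈ S, 0 < s)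
    (m : ℕ) (hm : m = S.max' hS)
    (n : ℕ) (hn : m + 1 ≤ n)
    (k : ℕ) (π : Equiv.Perm (Fin (m + 1)))
    (hπ : DesSet π = S) (hπk : (π (Fin.last m) : ℕ) + 1 = k) :
    (∑ w ∈ Finset.univ.filter (fun w : Equiv.Perm (Fin n) =>
        DesSet w = S ∧ ∀ i j : Fin (m + 1),
          (π i < π j ↔ w (Fin.castLE hn i) < w (Fin.castLE hn j))),
      (X : Polynomial ℝ) ^ invNum w) = X ^ invNum π * qBinom (n - k) (m - k + 1) :=
  stmt9_general S hS m hm n hn k π hπ hπk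

end
end

section
/- For every integer n ≥ 1, the generating polynomial Σ q^{ℓ(π)} over all π ∈ S_n with empty peak set equals (−q;q)_{n−1} = (1+q)(1+q^2)⋯(1+q^{n−1}). -/
open Polynomial Finset

noncomputable section

/-!
In a peak-free permutation of `{1, …, n+1}` the maximum `n+1` stands first or last, since
anywhere else it would be a peak. Deleting it is a bijection, in either case, onto the peak-free
permutations of `{1, …, n}`; it removes `n` inversions when the maximum stands first and none when
it stands last. Hence `P_∅(n+1) = (1 + q^n) P_∅(n)`, and `P_∅(1) = 1`.
-/

namespace Equiv.Perm

variable {n : ℕ}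

def PeakFree (π : Perm (Fin n)) : Prop :=
  ∀ a b c : Fin n, (a : ℕ) + 1 = b → (b : ℕ) + 1 = c → ¬(π a < π b ∧ π c < π b)

theorem peakSet_eq_empty_iff (π : Perm (Fin n)) : PeakSet π = ∅ ↔ PeakFree π := by
  simp only [PeakSet, PeakFree, Finset.image_eq_empty, Finset.filter_eq_empty_iff,
    Finset.mem_univ, true_implies, not_exists, not_and]
  exact ⟨fun h a b c => h a c, fun h b a c => h a b c⟩

theorem invNum_eq_sum (π : Perm (Fin n)) :
    invNum π = ∑ i, ∑ j, if i < j ∧ π j < π i then 1 else 0 := by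
  rw [invNum, Finset.card_filter, Fintype.sum_prod_type]

/-- The permutation of `Fin (n + 1)` taking the maximal value `Fin.last n` at position
`e.symm none`, and the values of `σ` at the other positions, in the order given by `e`. -/
def insertMax (e : Fin (n + 1) ≃ Option (Fin n)) (σ : Perm (Fin n)) : Perm (Fin (n + 1)) :=
  (e.trans σ.optionCongr).trans finSuccEquivLast.symm

section insertMax

variable (e : Fin (n + 1) ≃ Option (Fin n))

@[simp]
theorem insertMax_apply_symm_none (σ : Perm (Fin n)) :
    insertMax e σ (e.symm none) = Fin.last n := by
  simp [insertMax]

@[simp]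
theorem insertMax_apply_symm_some (σ : Perm (Fin n)) (i : Fin n) :
    insertMax e σ (e.symm (some i)) = (σ i).castSucc := by
  simp [insertMax]

theorem insertMax_injective : Function.Injective (insertMax e) := by
  intro σ τ h
  ext i : 1
  simpa using congr($h (e.symm (some i)))

theorem exists_insertMax_eq {π : Perm (Fin (n + 1))} (h : π (e.symm none) = Fin.last n) :
    ∃ σ, insertMax e σ = π := by
  set p : Perm (Option (Fin n)) := (e.symm.trans π).trans finSuccEquivLast
  have hp : p none = none := by simp [p, h]
  refine ⟨removeNone p, ?_⟩
  rw [insertMax, map_equiv_removeNone, hp, swap_self, ← one_def, one_mul]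
  ext i : 1
  simp [p]

end insertMax

abbrev appendMax (σ : Perm (Fin n)) : Perm (Fin (n + 1)) := insertMax finSuccEquivLast σ

abbrev prependMax (σ : Perm (Fin n)) : Perm (Fin (n + 1)) := insertMax (finSuccEquiv n) σ

@[simp]
theorem appendMax_last (σ : Perm (Fin n)) : appendMax σ (Fin.last n) = Fin.last n := by
  simpa using insertMax_apply_symm_none finSuccEquivLast σ

@[simp]
theorem appendMax_castSucc (σ : Perm (Fin n)) (i : Fin n) :
    appendMax σ i.castSucc = (σ i).castSucc := by
  simpa using insertMax_apply_symm_some finSuccEquivLast σ i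

@[simp]
theorem prependMax_zero (σ : Perm (Fin n)) : prependMax σ 0 = Fin.last n := by
  simpa using insertMax_apply_symm_none (finSuccEquiv n) σ

@[simp]
theorem prependMax_succ (σ : Perm (Fin n)) (i : Fin n) :
    prependMax σ i.succ = (σ i).castSucc := by
  simpa using insertMax_apply_symm_some (finSuccEquiv n) σ i

theorem invNum_appendMax (σ : Perm (Fin n)) : invNum (appendMax σ) = invNum σ := by
  simp only [invNum_eq_sum, Fin.sum_univ_castSucc, appendMax_castSucc, appendMax_last,
    Fin.castSucc_lt_castSucc_iff]
  simp [(Fin.le_last _).not_gt]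

theorem invNum_prependMax (σ : Perm (Fin n)) : invNum (prependMax σ) = n + invNum σ := by
  simp only [invNum_eq_sum, Fin.sum_univ_succ, prependMax_succ, prependMax_zero,
    Fin.castSucc_lt_castSucc_iff, Fin.succ_lt_succ_iff]
  simp [Fin.castSucc_lt_last]

theorem appendMax_ne_prependMax (σ τ : Perm (Fin (n + 1))) : appendMax σ ≠ prependMax τ := by
  intro h
  have h₀ := congr($h (Fin.castSucc 0))
  rw [appendMax_castSucc, Fin.castSucc_zero, prependMax_zero] at h₀
  exact Fin.castSucc_ne_last _ h₀

theorem peakFree_appendMax_iff (σ : Perm (Fin n)) : PeakFree (appendMax σ) ↔ PeakFree σ := by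
  refine ⟨fun h a b c hab hbc => by simpa using h a.castSucc b.castSucc c.castSucc hab hbc, ?_⟩
  rintro h a b c hab hbc ⟨hba, hbc'⟩
  obtain ⟨c, rfl⟩ := Fin.exists_castSucc_eq.mpr fun hc : c = Fin.last n => by
    simp [hc, (Fin.le_last _).not_gt] at hbc'
  obtain ⟨b, rfl⟩ := Fin.exists_castSucc_eq.mpr (Fin.ne_last_of_lt (show b < c.castSucc by omega))
  obtain ⟨a, rfl⟩ := Fin.exists_castSucc_eq.mpr (Fin.ne_last_of_lt (show a < b.castSucc by omega))
  simp only [appendMax_castSucc, Fin.castSucc_lt_castSucc_iff] at hba hbc'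
  exact h a b c hab hbc ⟨hba, hbc'⟩

theorem peakFree_prependMax_iff (σ : Perm (Fin n)) : PeakFree (prependMax σ) ↔ PeakFree σ := by
  refine ⟨fun h a b c hab hbc => by
    simpa using h a.succ b.succ c.succ (by simpa using hab) (by simpa using hbc), ?_⟩
  rintro h a b c hab hbc ⟨hba, hbc'⟩
  obtain ⟨a, rfl⟩ := Fin.exists_succ_eq.mpr fun ha : a = 0 => by
    simp [ha, (Fin.le_last _).not_gt] at hba
  obtain ⟨b, rfl⟩ := Fin.exists_succ_eq.mpr (Fin.ne_zero_of_lt (show a.succ < b by omega))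
  obtain ⟨c, rfl⟩ := Fin.exists_succ_eq.mpr (Fin.ne_zero_of_lt (show b.succ < c by omega))
  simp only [prependMax_succ, Fin.castSucc_lt_castSucc_iff] at hba hbc'
  exact h a b c (by simpa using hab) (by simpa using hbc) ⟨hba, hbc'⟩

theorem PeakFree.eq_zero_or_eq_last {π : Perm (Fin (n + 1))} (h : PeakFree π) {b : Fin (n + 1)}
    (hb : π b = Fin.last n) : b = 0 ∨ b = Fin.last n := by
  by_contra! hne
  have hb₀ : (b : ℕ) ≠ 0 := fun h₀ => hne.1 (Fin.ext h₀)
  have hbn : (b : ℕ) ≠ n := fun hn => hne.2 (Fin.ext hn)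
  have hlt : ∀ x, x ≠ b → π x < π b := fun x hx =>
    hb ▸ Fin.lt_last_iff_ne_last.mpr (hb ▸ π.injective.ne hx)
  exact h ⟨b - 1, by omega⟩ b ⟨b + 1, by omega⟩ (by simp; omega) rfl
    ⟨hlt _ (by simp [Fin.ext_iff]; omega), hlt _ (by simp [Fin.ext_iff])⟩

theorem peakFree_iff_exists (π : Perm (Fin (n + 1))) :
    PeakFree π ↔ (∃ σ, PeakFree σ ∧ appendMax σ = π) ∨ (∃ σ, PeakFree σ ∧ prependMax σ = π) := by
  constructor
  · intro h
    obtain ⟨b, hb⟩ := π.surjective (Fin.last _)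
    rcases h.eq_zero_or_eq_last hb with rfl | rfl
    · obtain ⟨σ, rfl⟩ := exists_insertMax_eq (finSuccEquiv _) (by simpa using hb)
      exact Or.inr ⟨σ, (peakFree_prependMax_iff σ).mp h, rfl⟩
    · obtain ⟨σ, rfl⟩ := exists_insertMax_eq finSuccEquivLast (by simpa using hb)
      exact Or.inl ⟨σ, (peakFree_appendMax_iff σ).mp h, rfl⟩
  · rintro (⟨σ, hσ, rfl⟩ | ⟨σ, hσ, rfl⟩)
    exacts [(peakFree_appendMax_iff σ).mpr hσ, (peakFree_prependMax_iff σ).mpr hσ]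

end Equiv.Perm

open Equiv.Perm

theorem ppoly_empty_one : Ppoly ∅ 1 = 1 := by
  simp [Ppoly, invNum, PeakSet, Fin.fin_one_eq_zero]

theorem ppoly_empty_succ_succ (n : ℕ) :
    Ppoly ∅ (n + 2) = (1 + X ^ (n + 1)) * Ppoly ∅ (n + 1) := by
  set F := univ.filter fun σ : Equiv.Perm (Fin (n + 1)) => PeakSet σ = ∅
  have hF : univ.filter (fun π : Equiv.Perm (Fin (n + 2)) => PeakSet π = ∅) =
      F.image appendMax ∪ F.image prependMax := by
    ext π
    simp [F, peakSet_eq_empty_iff, peakFree_iff_exists π]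
  have hdisj : Disjoint (F.image appendMax) (F.image prependMax) := by
    simpa [Finset.disjoint_left] using fun σ _ τ _ h => appendMax_ne_prependMax σ τ h.symm
  rw [Ppoly, hF, sum_union hdisj, sum_image (insertMax_injective _).injOn,
    sum_image (insertMax_injective _).injOn]
  simp only [invNum_appendMax, invNum_prependMax, pow_add, ← mul_sum]
  rw [Ppoly]
  ring

theorem ppoly_empty_succ (n : ℕ) : Ppoly ∅ (n + 1) = qPoch n := by
  induction n with
  | zero => simp [ppoly_empty_one, qPoch]
  | succ n ih => rw [ppoly_empty_succ_succ, ih, qPoch, qPoch, prod_range_succ]; ring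

/-- `P_∅(n,q) = (−q;q)_{n-1} = (1+q)(1+q²)⋯(1+q^{n-1})` for `n ≥ 1`. -/
theorem stmt10 (n : ℕ) (hn : 1 ≤ n) : Ppoly ∅ n = qPoch (n - 1) := by
  obtain ⟨m, rfl⟩ := Nat.exists_eq_add_of_le' hn
  exact ppoly_empty_succ m
end
end

section
/- For every odd integer m ≥ 1, the polynomial E_m(q) is palindromic in degree C(m,2) = m(m−1)/2, i.e., E_m(q) = q^{m(m−1)/2} · E_m(1/q). -/
/-!
Reversing the one-line notation, `w ↦ w ∘ rev`, is an involution of `𝔖_m` that turns the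
inversions of `w` into its non-inversions, so `ℓ(w ∘ rev) = C(m,2) - ℓ(w)`. When `m` is odd,
reversing an up-down word `w(1) < w(2) > ⋯ > w(m)` gives an up-down word again, so the involution
preserves alternating permutations and pairs the term `q^ℓ(w)` of `E_m(q)` with
`q^(C(m,2) - ℓ(w))`.
-/

open Polynomial Finset

noncomputable section

/-- `E_m(q) = Σ q^{ℓ(w)}` over alternating permutations `w ∈ 𝔖_m`,
i.e. `w(1) < w(2) > w(3) < ⋯` in one-line notation. -/
def Epoly (m : ℕ) : Polynomial ℝ :=
  ∑ w ∈ Finset.univ.filter (fun w : Equiv.Perm (Fin m) =>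
      ∀ a b : Fin m, (a : ℕ) + 1 = (b : ℕ) →
        ((Even (a : ℕ) → w a < w b) ∧ (¬ Even (a : ℕ) → w b < w a))),
    X ^ invNum w

theorem Finset.sum_pow_eq_pow_mul_sum_inv_pow_of_involutive {ι K : Type*} [Field K]
    {s : Finset ι} {σ : ι → ι} (hσ : Function.Involutive σ) (hσs : ∀ x ∈ s, σ x ∈ s)
    {f : ι → ℕ} {N : ℕ} (hf : ∀ x ∈ s, f (σ x) + f x = N) {q : K} (hq : q ≠ 0) :
    ∑ x ∈ s, q ^ f x = q ^ N * ∑ x ∈ s, q⁻¹ ^ f x := by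
  have hterm : ∀ x ∈ s, q ^ N * q⁻¹ ^ f x = q ^ f (σ x) := by
    intro x hx
    rw [← hf x hx, pow_add, mul_assoc, ← mul_pow, mul_inv_cancel₀ hq, one_pow, mul_one]
  rw [mul_sum, sum_congr rfl hterm]
  exact sum_nbij' σ σ hσs hσs (fun x _ => hσ x) (fun x _ => hσ x) (fun x _ => by rw [hσ])

theorem Fin.card_filter_fst_lt_snd (m : ℕ) :
    #{p : Fin m × Fin m | p.1 < p.2} = m * (m - 1) / 2 := by
  have hcol : ∀ j : Fin m, #{i : Fin m | i < j} = j := fun j => by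
    rw [filter_gt_eq_Iio, Fin.card_Iio]
  rw [card_filter, Fintype.sum_prod_type, sum_comm]
  simp only [← card_filter, hcol]
  rw [Fin.sum_univ_eq_sum_range (fun j => j), sum_range_id]

theorem invNum_revPerm_trans {m : ℕ} (w : Equiv.Perm (Fin m)) :
    invNum (Fin.revPerm.trans w) = #{p : Fin m × Fin m | p.1 < p.2 ∧ w p.1 < w p.2} := by
  refine card_nbij' (fun p => (p.2.rev, p.1.rev)) (fun p => (p.2.rev, p.1.rev)) ?_ ?_ ?_ ?_ <;>
    intro p <;> simp

theorem invNum_revPerm_trans_add_invNum {m : ℕ} (w : Equiv.Perm (Fin m)) :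
    invNum (Fin.revPerm.trans w) + invNum w = m * (m - 1) / 2 := by
  rw [invNum_revPerm_trans, invNum, ← card_union_of_disjoint, ← filter_or,
    ← Fin.card_filter_fst_lt_snd]
  · congr 1
    refine filter_congr fun p _ => ⟨fun h => h.elim And.left And.left, fun h => ?_⟩
    rcases lt_or_gt_of_ne (w.injective.ne h.ne) with hlt | hgt
    exacts [Or.inl ⟨h, hlt⟩, Or.inr ⟨h, hgt⟩]
  · exact disjoint_filter.2 fun p _ h h' => h.2.asymm h'.2

def IsAlternating {m : ℕ} (w : Equiv.Perm (Fin m)) : Prop :=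
  ∀ a b : Fin m, (a : ℕ) + 1 = (b : ℕ) →
    ((Even (a : ℕ) → w a < w b) ∧ (¬ Even (a : ℕ) → w b < w a))

theorem IsAlternating.revPerm_trans {m : ℕ} (hodd : Odd m) {w : Equiv.Perm (Fin m)}
    (hw : IsAlternating w) : IsAlternating (Fin.revPerm.trans w) := by
  intro a b hab
  have hrev : (b.rev : ℕ) + 1 = a.rev := by simp only [Fin.val_rev]; omega
  have hpar : Even (b.rev : ℕ) ↔ ¬ Even (a : ℕ) := by
    obtain ⟨k, hk⟩ := hodd
    simp only [Fin.val_rev, Nat.even_iff]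
    omega
  obtain ⟨hup, hdown⟩ := hw b.rev a.rev hrev
  exact ⟨fun ha => hdown (hpar.not_left.mpr ha), fun ha => hup (hpar.mpr ha)⟩

theorem stmt17_general (m : ℕ) (hodd : Odd m) (q : ℝ) (hq : q ≠ 0) :
    (Epoly m).eval q = q ^ (m * (m - 1) / 2) * (Epoly m).eval q⁻¹ := by
  simp only [Epoly, eval_finsetSum, eval_pow, eval_X]
  refine sum_pow_eq_pow_mul_sum_inv_pow_of_involutive (σ := (Fin.revPerm.trans ·))
    (fun w => by ext; simp) (fun w hw => ?_) (fun w _ => invNum_revPerm_trans_add_invNum w) hq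
  simp only [mem_filter, mem_univ, true_and] at hw ⊢
  exact IsAlternating.revPerm_trans hodd hw

/-- for odd `m ≥ 1`, `E_m(q)` is palindromic in degree `C(m,2) = m(m-1)/2`,
i.e. `E_m(q) = q^{m(m-1)/2} E_m(1/q)`. -/
theorem stmt17 (m : ℕ) (hm : 1 ≤ m) (hodd : Odd m) (q : ℝ) (hq : q ≠ 0) :
    (Epoly m).eval q = q ^ (m * (m - 1) / 2) * (Epoly m).eval q⁻¹ :=
  stmt17_general m hodd q hq

end
end

section
/- Let n ≥ 1 and let S = {s_1 < ⋯ < s_r} be a nonempty finite set of positive integers. Then there exists π ∈ S_n with Peak(π) = S if and only if s_1 > 1, s_{i+1} > s_i + 1 for all 1 ≤ i ≤ r−1, and s_r ≤ n − 1. -/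
open Polynomial Finset

noncomputable section

/-! A set `S` with `min S ≥ 2`, `max S ≤ n - 1` and no two consecutive elements is realised as a
peak set by ordering the positions so that those in `S` come last: the one-line word then rises
at every position outside `S` and falls right after each position of `S`. Conversely a peak
needs a left and a right neighbour, and two adjacent positions cannot both be peaks. -/

section PeakSet

variable {n : ℕ} (π : Equiv.Perm (Fin n))

lemma mem_peakSet_iff (m : ℕ) :
    m ∈ PeakSet π ↔ ∃ a b c : Fin n, (a : ℕ) + 1 = b ∧ (b : ℕ) + 1 = c ∧ (b : ℕ) + 1 = m ∧
      π a < π b ∧ π c < π b := by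
  simp only [PeakSet, mem_image, mem_filter, mem_univ, true_and]
  constructor
  · rintro ⟨b, ⟨a, c, hab, hbc, ha, hc⟩, rfl⟩
    exact ⟨a, b, c, hab, hbc, rfl, ha, hc⟩
  · rintro ⟨a, b, c, hab, hbc, rfl, ha, hc⟩
    exact ⟨b, ⟨a, c, hab, hbc, ha, hc⟩, rfl⟩

variable {π} {m : ℕ}

lemma two_le_of_mem_peakSet (h : m ∈ PeakSet π) : 2 ≤ m := by
  obtain ⟨a, b, c, hab, -, rfl, -⟩ := (mem_peakSet_iff π m).1 h
  omega

lemma lt_of_mem_peakSet (h : m ∈ PeakSet π) : m < n := by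
  obtain ⟨a, b, c, -, hbc, rfl, -⟩ := (mem_peakSet_iff π m).1 h
  omega

lemma succ_notMem_peakSet (h : m ∈ PeakSet π) : m + 1 ∉ PeakSet π := by
  intro h'
  obtain ⟨a, b, c, -, hbc, rfl, -, hcb⟩ := (mem_peakSet_iff π m).1 h
  obtain ⟨a', b', c', hab', -, hb', ha'b', -⟩ := (mem_peakSet_iff π _).1 h'
  obtain rfl : a' = b := Fin.ext (by omega)
  obtain rfl : b' = c := Fin.ext (by omega)
  exact lt_asymm hcb ha'b'

end PeakSet

lemma exists_perm_lt_iff_of_injective {α : Type*} [LinearOrder α] {n : ℕ} {k : Fin n → α}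
    (hk : Function.Injective k) : ∃ π : Equiv.Perm (Fin n), ∀ i j, π i < π j ↔ k i < k j := by
  set σ := Tuple.sort k
  have hmono : StrictMono (k ∘ σ) :=
    (Tuple.monotone_sort k).strictMono_of_injective (hk.comp σ.injective)
  refine ⟨σ.symm, fun i j => ?_⟩
  rw [← hmono.lt_iff_lt]
  simp

def peakKey (S : Finset ℕ) (n : ℕ) (i : Fin n) : ℕ :=
  (if (i : ℕ) + 1 ∈ S then n else 0) + i

lemma peakKey_injective (S : Finset ℕ) (n : ℕ) : Function.Injective (peakKey S n) := by
  intro i j h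
  have := i.isLt
  have := j.isLt
  unfold peakKey at h
  split_ifs at h <;> exact Fin.ext (by omega)

lemma peakKey_of_notMem {S : Finset ℕ} {n : ℕ} {i : Fin n} (h : (i : ℕ) + 1 ∉ S) :
    peakKey S n i = i := by
  simp [peakKey, h]

lemma peakKey_of_mem {S : Finset ℕ} {n : ℕ} {i : Fin n} (h : (i : ℕ) + 1 ∈ S) :
    peakKey S n i = n + i := by
  simp [peakKey, h]

lemma le_peakKey (S : Finset ℕ) {n : ℕ} (i : Fin n) : (i : ℕ) ≤ peakKey S n i := by
  unfold peakKey
  omega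

lemma exists_peakSet_eq_filter {S : Finset ℕ} (hS : ∀ x ∈ S, x + 1 ∉ S) (n : ℕ) :
    ∃ π : Equiv.Perm (Fin n), PeakSet π = S.filter fun m => 2 ≤ m ∧ m < n := by
  obtain ⟨π, hπ⟩ := exists_perm_lt_iff_of_injective (peakKey_injective S n)
  refine ⟨π, Finset.ext fun m => ⟨fun hm => ?_, fun hm => ?_⟩⟩
  · refine mem_filter.2 ⟨?_, two_le_of_mem_peakSet hm, lt_of_mem_peakSet hm⟩
    obtain ⟨-, b, c, -, hbc, rfl, -, hcb⟩ := (mem_peakSet_iff π _).1 hm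
    by_contra hb
    have := le_peakKey S c
    rw [hπ, peakKey_of_notMem hb] at hcb
    omega
  · obtain ⟨hmS, h2m, hmn⟩ := mem_filter.1 hm
    let a : Fin n := ⟨m - 2, by omega⟩
    let b : Fin n := ⟨m - 1, by omega⟩
    let c : Fin n := ⟨m, hmn⟩
    have hb : (b : ℕ) + 1 ∈ S := by simpa [b, show m - 1 + 1 = m by omega]
    have ha : (a : ℕ) + 1 ∉ S := fun h =>
      hS _ h (by simpa [a, show m - 2 + 1 + 1 = m by omega])
    have hc : (c : ℕ) + 1 ∉ S := hS m hmS
    refine (mem_peakSet_iff π m).2 ⟨a, b, c, ?_, ?_, ?_, ?_, ?_⟩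
    · simp only [a, b]; omega
    · simp only [b, c]; omega
    · simp only [b]; omega
    · rw [hπ, peakKey_of_notMem ha, peakKey_of_mem hb]
      simp only [a, b]
      omega
    · rw [hπ, peakKey_of_notMem hc, peakKey_of_mem hb]
      simp only [b, c]
      omega

theorem stmt18_general (n : ℕ) (S : Finset ℕ) (hS : S.Nonempty) :
    (∃ π : Equiv.Perm (Fin n), PeakSet π = S) ↔
      (1 < S.min' hS ∧ (∀ x ∈ S, ∀ y ∈ S, x < y → x + 1 < y) ∧ S.max' hS ≤ n - 1) := by
  constructor
  · rintro ⟨π, rfl⟩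
    refine ⟨two_le_of_mem_peakSet (min'_mem _ hS), fun x hx y hy hxy => ?_, ?_⟩
    · have : y ≠ x + 1 := fun h => succ_notMem_peakSet hx (h ▸ hy)
      omega
    · have := lt_of_mem_peakSet (max'_mem _ hS)
      omega
  · rintro ⟨hmin, hgap, hmax⟩
    have hS_sep : ∀ x ∈ S, x + 1 ∉ S := fun x hx hx1 =>
      (hgap x hx _ hx1 x.lt_succ_self).false
    obtain ⟨π, hπ⟩ := exists_peakSet_eq_filter hS_sep n
    refine ⟨π, hπ.trans (filter_true_of_mem fun m hm => ?_)⟩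
    have := S.min'_le m hm
    have := S.le_max' m hm
    omega

/-- a nonempty finite set `S` of positive integers is the peak set of some
permutation in `𝔖_n` iff `min S > 1`, consecutive elements of `S` differ by more than 1,
and `max S ≤ n - 1`. -/
theorem stmt18 (n : ℕ) (hn : 1 ≤ n) (S : Finset ℕ) (hS : S.Nonempty)
    (hpos : ∀ s ∈ S, 0 < s) :
    (∃ π : Equiv.Perm (Fin n), PeakSet π = S) ↔
      (1 < S.min' hS ∧ (∀ x ∈ S, ∀ y ∈ S, x < y → x + 1 < y) ∧ S.max' hS ≤ n - 1) :=
  stmt18_general n S hS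

end
end
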